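/- Let r ≥ 0 and m ≥ 1. In the graph A_m (with vertices a_0,…,a_{m-1} and b_J for J ⊆ {0,…,m-1}, and internally disjoint paths of length r+1 joining a_i to b_J exactly when i ∈ J), for all i and J there is a path of length exactly r+1 from a_i to b_J if and only if i ∈ J. -/

import Mathlib

/-- Index type for the paths of the graph `A_m`: pairs `(i, J)` with `i ∈ J`. -/
def AIdx (m : ℕ) := {p : Fin m × Set (Fin m) // p.1 ∈ p.2}

/-- Auxiliary relation for the graph `A_m` with subdivision parameter `r`:
vertices `a_i`, vertices `b_J` for `J ⊆ {0,…,m-1}`, and internally disjoint paths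
of length `r+1` joining `a_i` to `b_J` exactly when `i ∈ J`. -/
def AgraphRel (m r : ℕ) :
    (Fin m ⊕ Set (Fin m) ⊕ AIdx m × Fin r) →
    (Fin m ⊕ Set (Fin m) ⊕ AIdx m × Fin r) → Prop
  | Sum.inl i, Sum.inr (Sum.inl J) => r = 0 ∧ i ∈ J
  | Sum.inl i, Sum.inr (Sum.inr (e, k)) => e.val.1 = i ∧ k.val = 0
  | Sum.inr (Sum.inl J), Sum.inr (Sum.inr (e, k)) => e.val.2 = J ∧ k.val = r - 1
  | Sum.inr (Sum.inr (e, k)), Sum.inr (Sum.inr (e', k')) => e = e' ∧ k'.val = k.val + 1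
  | _, _ => False

/-- The incidence graph `A_m` (with each incidence path of length `r+1`). -/
def Agraph (m r : ℕ) : SimpleGraph (Fin m ⊕ Set (Fin m) ⊕ AIdx m × Fin r) :=
  SimpleGraph.fromRel (AgraphRel m r)

/-!
Grade the vertices of `A_m` by `level`: `a_i` at `0`, the `k`-th internal vertex of every
incidence path at `k + 1`, and `b_J` at `r + 1`. Levels of adjacent vertices differ by one, so
every walk from `a_i` to `b_J` has length at least `r + 1`, and a walk of length exactly `r + 1`
climbs one level per step. Climbing edges never leave the incidence paths ending at `b_J`, so
such a walk starts at some `a_i` with `i ∈ J`. Conversely, for `i ∈ J` the incidence path of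
`(i, J)` is a walk of length `r + 1`; being a shortest walk, it is a path.
-/

namespace SimpleGraph

variable {V : Type*} {G : SimpleGraph V} {u v : V}

theorem Walk.apply_le_apply_add_length {f : V → ℕ} (hf : ∀ ⦃x y⦄, G.Adj x y → f y ≤ f x + 1)
    (p : G.Walk u v) : f v ≤ f u + p.length := by
  induction p with
  | nil => simp
  | cons h _ ih => have := hf h; simp only [length_cons]; omega

theorem Walk.of_apply_eq_apply_add_length {f : V → ℕ} {P : V → Prop}
    (hf : ∀ ⦃x y⦄, G.Adj x y → f y ≤ f x + 1)
    (hP : ∀ ⦃x y⦄, G.Adj x y → f y = f x + 1 → P y → P x)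
    (p : G.Walk u v) (hp : f v = f u + p.length) (hv : P v) : P u := by
  induction p with
  | nil => exact hv
  | cons h q ih =>
    have hq := q.apply_le_apply_add_length hf
    have hstep := hf h
    simp only [Walk.length_cons] at hp
    exact hP h (by omega) (ih (by omega) hv)

theorem exists_walk_length_eq_of_adj_succ (s : ℕ → V) :
    ∀ n, (∀ k < n, G.Adj (s k) (s (k + 1))) → ∃ p : G.Walk (s 0) (s n), p.length = n
  | 0, _ => ⟨.nil, rfl⟩
  | n + 1, h => by
    obtain ⟨p, hp⟩ := exists_walk_length_eq_of_adj_succ s n fun k hk => h k (by omega)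
    exact ⟨p.concat (h n n.lt_succ_self), by simp [hp]⟩

theorem Walk.isPath_of_forall_length_le {p : G.Walk u v}
    (h : ∀ q : G.Walk u v, p.length ≤ q.length) : p.IsPath := by
  classical
  exact p.bypass_eq_self_of_length_le_length_bypass (h _) ▸ p.bypass_isPath

end SimpleGraph

abbrev AVertex (m r : ℕ) := Fin m ⊕ Set (Fin m) ⊕ AIdx m × Fin r

namespace Agraph

variable {m r : ℕ}

def level : AVertex m r → ℕ
  | .inl _ => 0
  | .inr (.inl _) => r + 1
  | .inr (.inr (_, k)) => k + 1

theorem level_le_level_add_one ⦃u v : AVertex m r⦄ (h : (Agraph m r).Adj u v) :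
    level v ≤ level u + 1 := by
  rcases h.2 with h | h <;>
  rcases u with i | J | ⟨e, k⟩ <;> rcases v with i' | J' | ⟨e', k'⟩ <;>
    simp only [AgraphRel, level] at * <;> omega

def OnPathTo (J : Set (Fin m)) : AVertex m r → Prop
  | .inl i => i ∈ J
  | .inr (.inl J') => J' = J
  | .inr (.inr (e, _)) => e.val.2 = J

theorem onPathTo_of_adj_of_level_eq {J : Set (Fin m)} ⦃u v : AVertex m r⦄
    (h : (Agraph m r).Adj u v) (hl : level v = level u + 1) (hv : OnPathTo J v) :
    OnPathTo J u := by
  rcases h.2 with h | h <;>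
  rcases u with i | J₁ | ⟨⟨⟨i, J₁⟩, hi⟩, k⟩ <;> rcases v with i' | J₂ | ⟨⟨⟨i', J₂⟩, hi'⟩, k'⟩ <;>
    simp only [AgraphRel, level, OnPathTo] at * <;> grind

theorem mem_of_walk_length_eq {i : Fin m} {J : Set (Fin m)}
    (p : (Agraph m r).Walk (.inl i) (.inr (.inl J))) (hp : p.length = r + 1) : i ∈ J :=
  p.of_apply_eq_apply_add_length (P := OnPathTo J) level_le_level_add_one
    onPathTo_of_adj_of_level_eq (by simp [level, hp]) rfl

theorem le_length {i : Fin m} {J : Set (Fin m)}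
    (p : (Agraph m r).Walk (.inl i) (.inr (.inl J))) : r + 1 ≤ p.length := by
  simpa [level] using p.apply_le_apply_add_length level_le_level_add_one

/-- The `k`-th vertex of the incidence path `a_i, c_0, …, c_{r-1}, b_J` of `e = (i, J)`. -/
def pathVertex (e : AIdx m) : ℕ → AVertex m r
  | 0 => .inl e.val.1
  | k + 1 => if h : k < r then .inr (.inr (e, ⟨k, h⟩)) else .inr (.inl e.val.2)

theorem pathVertex_adj (e : AIdx m) {k : ℕ} (hk : k < r + 1) :
    (Agraph m r).Adj (pathVertex e k) (pathVertex e (k + 1)) := by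
  rcases k with _ | k <;> simp only [pathVertex] <;> split_ifs <;> simp [Agraph, AgraphRel] <;>
    first | omega | exact ⟨by omega, e.prop⟩

theorem exists_walk_length_eq {i : Fin m} {J : Set (Fin m)} (hiJ : i ∈ J) :
    ∃ p : (Agraph m r).Walk (.inl i) (.inr (.inl J)), p.length = r + 1 := by
  obtain ⟨p, hp⟩ := SimpleGraph.exists_walk_length_eq_of_adj_succ
    (pathVertex ⟨(i, J), hiJ⟩) (r + 1) fun k hk => pathVertex_adj _ hk
  exact ⟨p.copy rfl (dif_neg r.lt_irrefl), (p.length_copy _ _).trans hp⟩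

end Agraph

theorem Agraph_path_iff_mem_general (r m : ℕ) (i : Fin m) (J : Set (Fin m)) :
    (∃ p : (Agraph m r).Walk (Sum.inl i) (Sum.inr (Sum.inl J)),
        p.IsPath ∧ p.length = r + 1) ↔ i ∈ J := by
  refine ⟨fun ⟨p, _, hp⟩ => Agraph.mem_of_walk_length_eq p hp, fun hiJ => ?_⟩
  obtain ⟨p, hp⟩ := Agraph.exists_walk_length_eq (r := r) hiJ
  exact ⟨p, p.isPath_of_forall_length_le fun q => hp ▸ Agraph.le_length q, hp⟩

/-- In `A_m` there is a path of length exactly `r+1` from `a_i` to `b_J` if and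
only if `i ∈ J`.  Hence the formula "there is a path of length `r+1` from `x` to
`y`" defines the incidence relation on the pairs `(a_i, b_J)`. -/
theorem Agraph_path_iff_mem (r m : ℕ) (hm : 1 ≤ m) (i : Fin m) (J : Set (Fin m)) :
    (∃ p : (Agraph m r).Walk (Sum.inl i) (Sum.inr (Sum.inl J)),
        p.IsPath ∧ p.length = r + 1) ↔ i ∈ J :=
  Agraph_path_iff_mem_general r m i J
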